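/- arXiv:1112.1396 — 4 statements merged into one kernel-verified Lean document; each statement's English description precedes it below -/
import Mathlib

section
/- If π is a Baxter permutation of length n, then its inverse π⁻¹ is also a Baxter permutation. -/
/-! If `π⁻¹` contains the pattern `2-41-3` at positions `i < j < k < l`, i.e.
`π⁻¹ k < π⁻¹ i ⋖ π⁻¹ l < π⁻¹ j`, walk through the values from `j` up to `k`: at some step
a value `m` sits to the right of position `π⁻¹ i` while `m + 1` sits to its left. The positions
`π⁻¹ (m + 1) < π⁻¹ i < π⁻¹ l < π⁻¹ m` then carry the pattern `3-14-2` in `π`.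
The patterns make sense for maps between arbitrary linear orders, and reversing either order swaps
them, so the case of `3-14-2` in `π⁻¹` reduces to the first one by passing to `OrderDual`. -/

def IsBaxter {n : ℕ} (π : Equiv.Perm (Fin n)) : Prop :=
  ¬ ∃ i j k l : Fin n, i < j ∧ j < k ∧ k < l ∧
    ((((π k : ℕ) < (π i : ℕ) + 1) ∧ ((π i : ℕ) + 1 = (π l : ℕ)) ∧ ((π l : ℕ) < (π j : ℕ))) ∨
     (((π j : ℕ) < (π i : ℕ)) ∧ ((π i : ℕ) = (π l : ℕ) + 1) ∧ ((π i : ℕ) < (π k : ℕ))))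

open OrderDual

theorem exists_covBy_of_le_of_not {α : Type*} [LinearOrder α] [SuccOrder α] [IsSuccArchimedean α]
    {P : α → Prop} {a b : α} (hab : a ≤ b) (ha : P a) (hb : ¬ P b) :
    ∃ m m', a ≤ m ∧ m ⋖ m' ∧ m' ≤ b ∧ P m ∧ ¬ P m' := by
  by_contra! hstep
  refine hb (Succ.rec (P := fun x _ => x ≤ b → P x) (fun _ => ha) ?_ hab le_rfl)
  intro m ham ih hmb
  have hPm := ih ((Order.le_succ m).trans hmb)
  by_cases hmax : IsMax m
  · rwa [Order.succ_eq_iff_isMax.mpr hmax]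
  · exact hstep m _ ham (Order.covBy_succ_of_not_isMax hmax) hmb hPm

section BaxterPattern

variable {α β : Type*}

def HasBaxterPattern2413 [LT α] [LT β] (f : β → α) : Prop :=
  ∃ i j k l, i < j ∧ j < k ∧ k < l ∧ f k < f i ∧ f i ⋖ f l ∧ f l < f j

def HasBaxterPattern3142 [LT α] [LT β] (f : β → α) : Prop :=
  ∃ i j k l, i < j ∧ j < k ∧ k < l ∧ f j < f l ∧ f l ⋖ f i ∧ f i < f k

def HasBaxterPattern [LT α] [LT β] (f : β → α) : Prop :=
  HasBaxterPattern2413 f ∨ HasBaxterPattern3142 f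

theorem hasBaxterPattern2413_toDual_comp_iff [LT α] [LT β] (f : β → α) :
    HasBaxterPattern2413 (toDual ∘ f) ↔ HasBaxterPattern3142 f := by
  simp only [HasBaxterPattern2413, HasBaxterPattern3142, Function.comp_apply, toDual_lt_toDual,
    toDual_covBy_toDual_iff]
  exact exists₄_congr fun i j k l => by tauto

theorem hasBaxterPattern3142_comp_ofDual_iff [LT α] [LT β] (f : β → α) :
    HasBaxterPattern3142 (f ∘ ofDual) ↔ HasBaxterPattern2413 f := by
  constructor
  · rintro ⟨i, j, k, l, hij, hjk, hkl, h⟩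
    exact ⟨ofDual l, ofDual k, ofDual j, ofDual i, hkl, hjk, hij, h⟩
  · rintro ⟨i, j, k, l, hij, hjk, hkl, h⟩
    exact ⟨toDual l, toDual k, toDual j, toDual i, hkl, hjk, hij, h⟩

variable [LinearOrder α] [SuccOrder α] [IsSuccArchimedean α] [LinearOrder β]

theorem HasBaxterPattern2413.symm {σ : α ≃ β} (h : HasBaxterPattern2413 σ) :
    HasBaxterPattern3142 σ.symm := by
  obtain ⟨i, j, k, l, hij, hjk, hkl, hki, hil, hlj⟩ := h
  obtain ⟨m, m', hjm, hmm', hm'k, him, him'⟩ :=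
    exists_covBy_of_le_of_not (P := fun x => σ i < σ x) hjk.le (hil.lt.trans hlj) hki.le.not_gt
  have hm'i : σ m' < σ i :=
    (not_lt.mp him').lt_of_ne (σ.injective.ne (hij.trans_le hjm |>.trans hmm'.lt).ne')
  have hlm : σ l < σ m :=
    (hil.ge_of_gt him).lt_of_ne (σ.injective.ne (hmm'.lt.trans_le hm'k |>.trans hkl).ne')
  refine ⟨σ m', σ i, σ l, σ m, hm'i, hil.lt, hlm, ?_⟩
  simpa using ⟨hij.trans_le hjm, hmm', hm'k.trans_lt hkl⟩

theorem HasBaxterPattern3142.symm {σ : α ≃ β} (h : HasBaxterPattern3142 σ) :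
    HasBaxterPattern2413 σ.symm := by
  rw [← hasBaxterPattern2413_toDual_comp_iff] at h
  exact (hasBaxterPattern3142_comp_ofDual_iff _).mp (h.symm (σ := σ.trans toDual))

theorem HasBaxterPattern.symm [SuccOrder β] [IsSuccArchimedean β] {σ : α ≃ β}
    (h : HasBaxterPattern σ) : HasBaxterPattern σ.symm :=
  h.elim (fun h => Or.inr h.symm) (fun h => Or.inl h.symm)

end BaxterPattern

theorem isBaxter_iff_not_hasBaxterPattern {n : ℕ} (π : Equiv.Perm (Fin n)) :
    IsBaxter π ↔ ¬ HasBaxterPattern π := by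
  rw [IsBaxter, not_iff_not]
  simp only [HasBaxterPattern, HasBaxterPattern2413, HasBaxterPattern3142, Fin.covBy_iff,
    Nat.covBy_iff_add_one_eq, Fin.lt_def]
  constructor
  · rintro ⟨i, j, k, l, hij, hjk, hkl, h⟩
    have hki : (π k : ℕ) ≠ π i := Fin.val_ne_of_ne (π.injective.ne (Fin.ne_of_val_ne (by omega)))
    have hjl : (π j : ℕ) ≠ π l := Fin.val_ne_of_ne (π.injective.ne (Fin.ne_of_val_ne (by omega)))
    rcases h with h | h
    · exact Or.inl ⟨i, j, k, l, hij, hjk, hkl, by omega⟩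
    · exact Or.inr ⟨i, j, k, l, hij, hjk, hkl, by omega⟩
  · rintro (⟨i, j, k, l, hij, hjk, hkl, h⟩ | ⟨i, j, k, l, hij, hjk, hkl, h⟩)
    · exact ⟨i, j, k, l, hij, hjk, hkl, Or.inl (by omega)⟩
    · exact ⟨i, j, k, l, hij, hjk, hkl, Or.inr (by omega)⟩

/-- The inverse of a Baxter permutation is Baxter. -/
theorem baxter_inverse {n : ℕ} (π : Equiv.Perm (Fin n)) (h : IsBaxter π) :
    IsBaxter π⁻¹ := by
  rw [isBaxter_iff_not_hasBaxterPattern] at h ⊢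
  exact fun hπ => h hπ.symm
end

section
/- For every m ≥ 2, every one-point deletion of the exceptional permutation 2 4 6 … (2m) 1 3 5 … (2m−1) yields a permutation of length 2m − 1 that is not simple. -/
/-- A block of a permutation is a set of consecutive positions whose image is a
range of consecutive values. `π` is simple if every block is a singleton or everything. -/
def IsSimple {n : ℕ} (π : Equiv.Perm (Fin n)) : Prop :=
  ∀ a b : Fin n, a ≤ b →
    (∃ c d : Fin n, (Finset.Icc a b).image π = Finset.Icc c d) →
    a = b ∨ Finset.Icc a b = Finset.univ

lemma top_fixed_block {n : ℕ} (hn : 3 ≤ n) (τ : Equiv.Perm (Fin n))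
    (t : Fin n) (ht : (t : ℕ) = n - 1) (hτt : τ t = t) : ¬ IsSimple τ := by
  intro hs
  have ha : 0 < n := by omega
  have hb : n - 2 < n := by omega
  set a : Fin n := ⟨0, ha⟩ with hadef
  set b : Fin n := ⟨n - 2, hb⟩ with hbdef
  have hIcc : Finset.Icc a b = Finset.univ.erase t := by
    ext j
    have hj := j.isLt
    simp only [Finset.mem_Icc, Finset.mem_erase, Finset.mem_univ, and_true, Ne,
      Fin.le_def, Fin.ext_iff, hadef, hbdef, ht]
    omega
  have himg : (Finset.Icc a b).image τ = Finset.Icc a b := by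
    rw [hIcc, Finset.image_erase τ.injective, Finset.image_univ_equiv, hτt]
  rcases hs a b (by simp only [hadef, hbdef, Fin.mk_le_mk]; omega) ⟨a, b, himg⟩ with h | h
  · have := congrArg Fin.val h
    simp [hadef, hbdef] at this
    omega
  · have ht' : t ∈ Finset.Icc a b := h ▸ Finset.mem_univ t
    rw [hIcc] at ht'
    exact (Finset.mem_erase.mp ht').1 rfl

lemma bot_fixed_block {n : ℕ} (hn : 3 ≤ n) (τ : Equiv.Perm (Fin n))
    (t : Fin n) (ht : (t : ℕ) = 0) (hτt : τ t = t) : ¬ IsSimple τ := by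
  intro hs
  have ha : 1 < n := by omega
  have hb : n - 1 < n := by omega
  set a : Fin n := ⟨1, ha⟩ with hadef
  set b : Fin n := ⟨n - 1, hb⟩ with hbdef
  have hIcc : Finset.Icc a b = Finset.univ.erase t := by
    ext j
    have hj := j.isLt
    simp only [Finset.mem_Icc, Finset.mem_erase, Finset.mem_univ, and_true, Ne,
      Fin.le_def, Fin.ext_iff, hadef, hbdef, ht]
    omega
  have himg : (Finset.Icc a b).image τ = Finset.Icc a b := by
    rw [hIcc, Finset.image_erase τ.injective, Finset.image_univ_equiv, hτt]
  rcases hs a b (by simp only [hadef, hbdef, Fin.mk_le_mk]; omega) ⟨a, b, himg⟩ with h | h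
  · have := congrArg Fin.val h
    simp [hadef, hbdef] at this
    omega
  · have ht' : t ∈ Finset.Icc a b := h ▸ Finset.mem_univ t
    rw [hIcc] at ht'
    exact (Finset.mem_erase.mp ht').1 rfl

lemma two_block {m : ℕ} (hm : 2 ≤ m) (σ : Equiv.Perm (Fin (2 * m))) (p : Fin (2 * m))
    (τ : Equiv.Perm (Fin (2 * m - 1))) (e : Fin (2 * m - 1) → Fin (2 * m))
    (he : StrictMono e)
    (hmiss : ∀ j, e j ≠ p)
    (hτ : ∀ a b, τ a < τ b ↔ σ (e a) < σ (e b))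
    (a b : Fin (2 * m - 1))
    (hab : e a < e b)
    (hv : σ (e a) < σ (e b))
    (hposbtw : ∀ x : Fin (2 * m), e a < x → x < e b → x = p)
    (hvalbtw : ∀ x : Fin (2 * m), σ (e a) < σ x → σ x < σ (e b) → x = p) :
    ¬ IsSimple τ := by
  intro hs
  have haltb : a < b := by
    by_contra h
    push_neg at h
    exact absurd hab (not_lt.mpr (he.monotone h))
  have hIcc : Finset.Icc a b = {a, b} := by
    ext j
    simp only [Finset.mem_Icc, Finset.mem_insert, Finset.mem_singleton]
    constructor
    · rintro ⟨h1, h2⟩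
      by_contra hc
      push_neg at hc
      obtain ⟨hc1, hc2⟩ := hc
      have hj1 : a < j := lt_of_le_of_ne h1 (Ne.symm hc1)
      have hj2 : j < b := lt_of_le_of_ne h2 hc2
      exact hmiss j (hposbtw (e j) (he hj1) (he hj2))
    · rintro (rfl | rfl)
      exacts [⟨le_refl _, le_of_lt haltb⟩, ⟨le_of_lt haltb, le_refl _⟩]
  have hτab : τ a < τ b := (hτ a b).mpr hv
  have hIm : (Finset.Icc a b).image τ = Finset.Icc (τ a) (τ b) := by
    rw [hIcc]
    ext j
    simp only [Finset.image_insert, Finset.image_singleton, Finset.mem_insert,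
      Finset.mem_singleton, Finset.mem_Icc]
    constructor
    · rintro (rfl | rfl)
      exacts [⟨le_refl _, le_of_lt hτab⟩, ⟨le_of_lt hτab, le_refl _⟩]
    · rintro ⟨h1, h2⟩
      by_contra hc
      push_neg at hc
      obtain ⟨hc1, hc2⟩ := hc
      have hj1 : τ a < j := lt_of_le_of_ne h1 (Ne.symm hc1)
      have hj2 : j < τ b := lt_of_le_of_ne h2 hc2
      have hjk : τ (τ.symm j) = j := τ.apply_symm_apply j
      rw [← hjk] at hj1 hj2
      have h1' := (hτ a (τ.symm j)).mp hj1
      have h2' := (hτ (τ.symm j) b).mp hj2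
      exact hmiss (τ.symm j) (hvalbtw (e (τ.symm j)) h1' h2')
  rcases hs a b (le_of_lt haltb) ⟨τ a, τ b, hIm⟩ with h | h
  · exact absurd h (ne_of_lt haltb)
  · have h1 : ({a, b} : Finset (Fin (2 * m - 1))).card ≤ 2 := by
      apply le_trans (Finset.card_insert_le _ _)
      simp
    rw [← hIcc, h, Finset.card_univ, Fintype.card_fin] at h1
    omega

/-- Every one-point deletion of the exceptional permutation 2 4 6 … (2m) 1 3 5 … (2m−1)
yields a non-simple permutation of length 2m − 1.  Here `e` is the strictly monotone
enumeration of the positions other than the deleted position `p`, and `τ` is the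
rank-ordering of `σ ∘ e`. -/
theorem exceptional_one_point_deletion_not_simple (m : ℕ) (hm : 2 ≤ m)
    (σ : Equiv.Perm (Fin (2 * m)))
    (hσ : ∀ i : Fin (2 * m),
      (σ i : ℕ) = if (i : ℕ) < m then 2 * (i : ℕ) + 1 else 2 * ((i : ℕ) - m))
    (p : Fin (2 * m)) (τ : Equiv.Perm (Fin (2 * m - 1)))
    (e : Fin (2 * m - 1) → Fin (2 * m)) (he : StrictMono e)
    (hrange : ∀ x : Fin (2 * m), x ≠ p → ∃ a, e a = x)
    (hτ : ∀ a b, τ a < τ b ↔ σ (e a) < σ (e b)) :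
    ¬ IsSimple τ := by
  have hp := p.isLt
  -- e misses p
  have hmiss : ∀ j, e j ≠ p := by
    intro j hj
    have hsurj : Function.Surjective e := by
      intro x
      by_cases hx : x = p
      · exact ⟨j, hx ▸ hj⟩
      · exact hrange x hx
    have := Fintype.card_le_of_surjective e hsurj
    simp only [Fintype.card_fin] at this
    omega
  have hτle : ∀ a b, τ a ≤ τ b ↔ σ (e a) ≤ σ (e b) := by
    intro a b
    rw [← not_lt, ← not_lt, hτ]
  rcases (by omega : p.val + 1 < m ∨ p.val + 1 = m ∨ p.val = m ∨ m < p.val) with hc | hc | hc | hc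
  · -- generic left case: deleted value 2p+1, block at positions m+p, m+p+1
    obtain ⟨a, ha⟩ := hrange ⟨m + p.val, by omega⟩ (by simp [Fin.ext_iff]; omega)
    obtain ⟨b, hb⟩ := hrange ⟨m + p.val + 1, by omega⟩ (by simp [Fin.ext_iff]; omega)
    have hva : (σ (e a) : ℕ) = 2 * p.val := by
      rw [ha, hσ]; simp only [Fin.val_mk]; rw [if_neg (by omega)]; omega
    have hvb : (σ (e b) : ℕ) = 2 * p.val + 2 := by
      rw [hb, hσ]; simp only [Fin.val_mk]; rw [if_neg (by omega)]; omega
    refine two_block hm σ p τ e he hmiss hτ a b ?_ ?_ ?_ ?_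
    · rw [ha, hb]; simp [Fin.lt_def]
    · rw [Fin.lt_def, hva, hvb]; omega
    · intro x h1 h2
      rw [ha] at h1; rw [hb] at h2
      rw [Fin.lt_def] at h1 h2
      simp only [] at h1 h2
      omega
    · intro x h1 h2
      rw [Fin.lt_def, hva] at h1
      rw [Fin.lt_def, hvb] at h2
      have hx := hσ x
      ext
      split_ifs at hx with h <;> omega
  · -- p = m - 1 : deleted value is the maximum; τ fixes the top
    obtain ⟨a0, ha0⟩ := hrange ⟨2 * m - 1, by omega⟩ (by simp [Fin.ext_iff]; omega)
    have htlt : 2 * m - 2 < 2 * m - 1 := by omega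
    set t : Fin (2 * m - 1) := ⟨2 * m - 2, htlt⟩ with htdef
    have het : e t = ⟨2 * m - 1, by omega⟩ := by
      have h1 : a0 ≤ t := by
        have := a0.isLt
        simp [htdef, Fin.le_def]; omega
      have h2 : e a0 ≤ e t := he.monotone h1
      have h3 : e t ≤ e a0 := by
        rw [ha0, Fin.le_def]
        have := (e t).isLt
        simpa using by omega
      rw [← ha0]
      exact le_antisymm h3 h2
    have hvt : (σ (e t) : ℕ) = 2 * m - 2 := by
      rw [het, hσ]; simp only [Fin.val_mk]; rw [if_neg (by omega)]; omega
    have htop : ∀ j, τ j ≤ τ t := by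
      intro j
      rw [hτle, Fin.le_def, hvt]
      have hx := hσ (e j)
      have hlt := (σ (e j)).isLt
      have hne : (σ (e j) : ℕ) ≠ 2 * m - 1 := by
        intro hv
        apply hmiss j
        ext
        split_ifs at hx with h <;> omega
      omega
    have hτt : τ t = t := by
      have h1 : t ≤ τ t := by
        have := htop (τ.symm t)
        rwa [τ.apply_symm_apply] at this
      have h2 : τ t ≤ t := by
        rw [Fin.le_def, htdef]
        have := (τ t).isLt
        simpa using by omega
      exact le_antisymm h2 h1
    exact top_fixed_block (by omega) τ t (by simp only [htdef, Fin.val_mk]; omega) hτt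
  · -- p = m : deleted value is the minimum; τ fixes the bottom
    obtain ⟨a0, ha0⟩ := hrange ⟨0, by omega⟩ (by simp [Fin.ext_iff]; omega)
    have htlt : 0 < 2 * m - 1 := by omega
    set t : Fin (2 * m - 1) := ⟨0, htlt⟩ with htdef
    have het : e t = ⟨0, by omega⟩ := by
      have h1 : t ≤ a0 := by simp [htdef, Fin.le_def]
      have h2 : e t ≤ e a0 := he.monotone h1
      rw [ha0] at h2
      have h3 : (⟨0, by omega⟩ : Fin (2 * m)) ≤ e t := by simp [Fin.le_def]
      exact le_antisymm h2 h3
    have hvt : (σ (e t) : ℕ) = 1 := by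
      rw [het, hσ]; simp only [Fin.val_mk]; rw [if_pos (by omega)]
    have hbot : ∀ j, τ t ≤ τ j := by
      intro j
      rw [hτle, Fin.le_def, hvt]
      have hx := hσ (e j)
      have hne : (σ (e j) : ℕ) ≠ 0 := by
        intro hv
        apply hmiss j
        ext
        split_ifs at hx with h <;> omega
      omega
    have hτt : τ t = t := by
      have h1 : τ t ≤ t := by
        have := hbot (τ.symm t)
        rwa [τ.apply_symm_apply] at this
      have h2 : t ≤ τ t := by simp [htdef, Fin.le_def]
      exact le_antisymm h1 h2
    exact bot_fixed_block (by omega) τ t (by simp only [htdef, Fin.val_mk]) hτt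
  · -- generic right case: deleted value 2(p-m), block at positions p-m-1, p-m
    obtain ⟨a, ha⟩ := hrange ⟨p.val - m - 1, by omega⟩ (by simp [Fin.ext_iff]; omega)
    obtain ⟨b, hb⟩ := hrange ⟨p.val - m, by omega⟩ (by simp [Fin.ext_iff]; omega)
    have hva : (σ (e a) : ℕ) = 2 * (p.val - m - 1) + 1 := by
      rw [ha, hσ]; simp only [Fin.val_mk]; rw [if_pos (by omega)]
    have hvb : (σ (e b) : ℕ) = 2 * (p.val - m) + 1 := by
      rw [hb, hσ]; simp only [Fin.val_mk]; rw [if_pos (by omega)]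
    refine two_block hm σ p τ e he hmiss hτ a b ?_ ?_ ?_ ?_
    · rw [ha, hb]; simp [Fin.lt_def]; omega
    · rw [Fin.lt_def, hva, hvb]; omega
    · intro x h1 h2
      rw [ha] at h1; rw [hb] at h2
      rw [Fin.lt_def] at h1 h2
      simp only [] at h1 h2
      omega
    · intro x h1 h2
      rw [Fin.lt_def, hva] at h1
      rw [Fin.lt_def, hvb] at h2
      have hx := hσ x
      ext
      split_ifs at hx with h <;> omega
end

section
/- Deleting the values 1 and 2 from the permutation 2 4 6 … (2m) 1 3 5 … (2m−1) (for m ≥ 3) and rank-ordering the remaining values yields a simple permutation of length 2m − 2, namely 2 4 6 … (2m−2) 1 3 5 … (2m−3) shifted appropriately; in particular there exists a two-point deletion of this exceptional permutation yielding a simple permutation. -/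
open Finset

theorem Equiv.Perm.eq_of_forall_lt_iff {α : Type*} [LinearOrder α] [Finite α]
    {τ ρ : Equiv.Perm α} (h : ∀ a b, τ a < τ b ↔ ρ a < ρ b) : τ = ρ := by
  have hmono : StrictMono (τ ∘ ρ.symm) := fun x y hxy => (h _ _).mpr (by simpa using hxy)
  ext a
  simpa using hmono.apply_eq (x := ρ a)

lemma val_le_add_of_mem_block {n : ℕ} {π : Equiv.Perm (Fin n)} {a b c d : Fin n}
    (hblock : (Icc a b).image π = Icc c d) {x y : Fin n} (hx : x ∈ Icc a b) (hy : y ∈ Icc a b) :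
    (π x : ℕ) ≤ π y + (b - a) := by
  have hcard : (b : ℕ) + 1 - a = d + 1 - c := by
    simpa [card_image_of_injective _ π.injective, Fin.card_Icc] using congrArg card hblock
  have hπx : π x ∈ Icc c d := hblock ▸ mem_image_of_mem π hx
  have hπy : π y ∈ Icc c d := hblock ▸ mem_image_of_mem π hy
  simp only [mem_Icc, Fin.le_def] at hx hπx hπy
  omega

theorem isSimple_of_val_eq {n k : ℕ} (hn : n = 2 * k) (π : Equiv.Perm (Fin n))
    (hπ : ∀ i : Fin n, (π i : ℕ) = if (i : ℕ) < k then 2 * (i : ℕ) + 1 else 2 * ((i : ℕ) - k)) :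
    IsSimple π := by
  rintro a b hab ⟨c, d, hblock⟩
  have hspread {x y : Fin n} (hax : (a : ℕ) ≤ x) (hxb : (x : ℕ) ≤ b) (hay : (a : ℕ) ≤ y)
      (hyb : (y : ℕ) ≤ b) :=
    val_le_add_of_mem_block hblock (mem_Icc.mpr ⟨hax, hxb⟩) (mem_Icc.mpr ⟨hay, hyb⟩)
  rw [Fin.le_def] at hab
  have hb := b.isLt
  by_cases hbk : (b : ℕ) < k
  · have := hspread hab le_rfl le_rfl hab
    rw [hπ, hπ, if_pos hbk, if_pos (by omega)] at this
    exact Or.inl (Fin.ext (by omega))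
  by_cases hak : k ≤ (a : ℕ)
  · have := hspread hab le_rfl le_rfl hab
    rw [hπ, hπ, if_neg hbk, if_neg (by omega)] at this
    exact Or.inl (Fin.ext (by omega))
  obtain ⟨x, hx⟩ : ∃ x : Fin n, (x : ℕ) = k - 1 := ⟨⟨k - 1, by omega⟩, rfl⟩
  obtain ⟨y, hy⟩ : ∃ y : Fin n, (y : ℕ) = k := ⟨⟨k, by omega⟩, rfl⟩
  have := hspread (x := x) (y := y) (by omega) (by omega) (by omega) (by omega)
  rw [hπ, hπ, if_pos (by omega), if_neg (by omega)] at this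
  exact Or.inr (eq_univ_iff_forall.mpr fun z => mem_Icc.mpr ⟨by omega, by omega⟩)

/-- The positions of `1 3 … (2m−1) 0 2 … (2m−2)` whose value is neither `0` nor `1`. -/
def keptPositions (m : ℕ) (a : Fin (2 * m - 2)) : Fin (2 * m) :=
  ⟨if (a : ℕ) < m - 1 then (a : ℕ) + 1 else (a : ℕ) + 2, by have := a.isLt; split <;> omega⟩

lemma keptPositions_strictMono (m : ℕ) : StrictMono (keptPositions m) := by
  intro a b hab
  rw [Fin.lt_def] at hab ⊢
  simp only [keptPositions]
  split_ifs <;> omega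

lemma exists_keptPositions_eq_iff (m : ℕ) (x : Fin (2 * m)) :
    (∃ a, keptPositions m a = x) ↔ (x : ℕ) ≠ 0 ∧ (x : ℕ) ≠ m := by
  have hx := x.isLt
  constructor
  · rintro ⟨a, rfl⟩
    have := a.isLt
    simp only [keptPositions]
    split <;> omega
  · rintro ⟨hx0, hxm⟩
    refine ⟨⟨if (x : ℕ) < m then (x : ℕ) - 1 else (x : ℕ) - 2, by split <;> omega⟩, ?_⟩
    ext
    simp only [keptPositions]
    split_ifs <;> omega

def oddsThenEvens (m : ℕ) (a : Fin (2 * m - 2)) : Fin (2 * m - 2) :=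
  ⟨if (a : ℕ) < m - 1 then 2 * (a : ℕ) + 1 else 2 * ((a : ℕ) - (m - 1)),
    by have := a.isLt; split <;> omega⟩

lemma oddsThenEvens_injective (m : ℕ) : Function.Injective (oddsThenEvens m) := by
  intro a b hab
  have h := congrArg Fin.val hab
  simp only [oddsThenEvens] at h
  ext
  split_ifs at h <;> omega

noncomputable def oddsThenEvensPerm (m : ℕ) : Equiv.Perm (Fin (2 * m - 2)) :=
  Equiv.ofBijective (oddsThenEvens m)
    (Finite.injective_iff_bijective.mp (oddsThenEvens_injective m))

lemma oddsThenEvensPerm_val (m : ℕ) (i : Fin (2 * m - 2)) :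
    (oddsThenEvensPerm m i : ℕ) =
      if (i : ℕ) < m - 1 then 2 * (i : ℕ) + 1 else 2 * ((i : ℕ) - (m - 1)) :=
  rfl

theorem isSimple_oddsThenEvensPerm (m : ℕ) : IsSimple (oddsThenEvensPerm m) :=
  isSimple_of_val_eq (k := m - 1) (by omega) _ (oddsThenEvensPerm_val m)

theorem exceptional_two_point_deletion_simple_general (m : ℕ)
    (σ : Equiv.Perm (Fin (2 * m)))
    (hσ : ∀ i : Fin (2 * m),
      (σ i : ℕ) = if (i : ℕ) < m then 2 * (i : ℕ) + 1 else 2 * ((i : ℕ) - m)) :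
    (∀ (τ : Equiv.Perm (Fin (2 * m - 2))) (e : Fin (2 * m - 2) → Fin (2 * m)),
      StrictMono e → (∀ x : Fin (2 * m), (∃ a, e a = x) ↔ 2 ≤ (σ x : ℕ)) →
      (∀ a b, τ a < τ b ↔ σ (e a) < σ (e b)) → IsSimple τ) ∧
    (∃ (τ : Equiv.Perm (Fin (2 * m - 2))) (e : Fin (2 * m - 2) → Fin (2 * m)),
      StrictMono e ∧ (∀ x : Fin (2 * m), (∃ a, e a = x) ↔ 2 ≤ (σ x : ℕ)) ∧
      (∀ a b, τ a < τ b ↔ σ (e a) < σ (e b)) ∧ IsSimple τ) := by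
  have hkept (x : Fin (2 * m)) : (∃ a, keptPositions m a = x) ↔ 2 ≤ (σ x : ℕ) := by
    rw [exists_keptPositions_eq_iff, hσ]
    split <;> omega
  have hval (a : Fin (2 * m - 2)) : (σ (keptPositions m a) : ℕ) = oddsThenEvensPerm m a + 2 := by
    have := a.isLt
    rw [hσ, oddsThenEvensPerm_val]
    simp only [keptPositions]
    split_ifs <;> omega
  have hrank (a b : Fin (2 * m - 2)) :
      oddsThenEvensPerm m a < oddsThenEvensPerm m b ↔ σ (keptPositions m a) < σ (keptPositions m b) := by
    rw [Fin.lt_def, Fin.lt_def, hval, hval]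
    omega
  refine ⟨fun τ e he herange hτ => ?_,
    ⟨_, _, keptPositions_strictMono m, hkept, hrank, isSimple_oddsThenEvensPerm m⟩⟩
  obtain rfl : e = keptPositions m :=
    (he.range_inj (keptPositions_strictMono m)).mp
      (Set.ext fun x => (herange x).trans (hkept x).symm)
  obtain rfl : τ = oddsThenEvensPerm m :=
    Equiv.Perm.eq_of_forall_lt_iff fun a b => (hτ a b).trans (hrank a b).symm
  exact isSimple_oddsThenEvensPerm m

/-- Deleting the values 1 and 2 (0-indexed: the values 0 and 1) from the exceptional
permutation 2 4 6 … (2m) 1 3 5 … (2m−1), m ≥ 3, and rank-ordering yields a simple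
permutation of length 2m − 2; in particular a two-point deletion of this exceptional
permutation yields a simple permutation.  Here `e` enumerates (strictly monotonically)
the positions whose value is kept, and `τ` is the rank-ordering. -/
theorem exceptional_two_point_deletion_simple (m : ℕ) (hm : 3 ≤ m)
    (σ : Equiv.Perm (Fin (2 * m)))
    (hσ : ∀ i : Fin (2 * m),
      (σ i : ℕ) = if (i : ℕ) < m then 2 * (i : ℕ) + 1 else 2 * ((i : ℕ) - m)) :
    (∀ (τ : Equiv.Perm (Fin (2 * m - 2))) (e : Fin (2 * m - 2) → Fin (2 * m)),
      StrictMono e → (∀ x : Fin (2 * m), (∃ a, e a = x) ↔ 2 ≤ (σ x : ℕ)) →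
      (∀ a b, τ a < τ b ↔ σ (e a) < σ (e b)) → IsSimple τ) ∧
    (∃ (τ : Equiv.Perm (Fin (2 * m - 2))) (e : Fin (2 * m - 2) → Fin (2 * m)),
      StrictMono e ∧ (∀ x : Fin (2 * m), (∃ a, e a = x) ↔ 2 ≤ (σ x : ℕ)) ∧
      (∀ a b, τ a < τ b ↔ σ (e a) < σ (e b)) ∧ IsSimple τ) :=
  exceptional_two_point_deletion_simple_general m σ hσ
end

section
/- Let π be a Baxter permutation of length i and let π' be obtained from π by inserting the value i + 1 immediately before the position of the value i (all other values unchanged in relative order). Then π' is a Baxter permutation of length i + 1. -/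
/-- Inserting the value i+1 immediately before the value i in a Baxter permutation of
length i keeps it Baxter.  Here `q` is the position of the maximum value of `π`;
positions before `q` are unchanged, position `q` gets the new maximum value, and the
old entries from position `q` on are shifted one to the right. -/
theorem baxter_insert_before_max (n : ℕ) (hn : 1 ≤ n) (π : Equiv.Perm (Fin n))
    (hbax : IsBaxter π) (q : Fin n) (hq : (π q : ℕ) = n - 1)
    (π' : Equiv.Perm (Fin (n + 1)))
    (hbefore : ∀ a : Fin n, (a : ℕ) < (q : ℕ) → (π' a.castSucc : ℕ) = (π a : ℕ))
    (hnew : (π' q.castSucc : ℕ) = n)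
    (hafter : ∀ a : Fin n, (q : ℕ) ≤ (a : ℕ) → (π' a.succ : ℕ) = (π a : ℕ)) :
    IsBaxter π' := by
  rintro ⟨i, j, k, l, hij, hjk, hkl, hpat⟩
  have hij' : (i:ℕ) < (j:ℕ) := hij
  have hjk' : (j:ℕ) < (k:ℕ) := hjk
  have hkl' : (k:ℕ) < (l:ℕ) := hkl
  have hqn : (q:ℕ) < n := q.isLt
  have hπlt : ∀ a : Fin n, (π a : ℕ) < n := fun a => (π a).isLt
  have hπne : ∀ a : Fin n, (a:ℕ) ≠ (q:ℕ) → (π a : ℕ) ≠ n - 1 := by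
    intro a ha h
    exact ha (congrArg Fin.val (π.injective (Fin.ext (h.trans hq.symm))))
  have hval : ∀ p : Fin (n+1), (p:ℕ) = (q:ℕ) → (π' p : ℕ) = n := by
    intro p hp
    have hpq : p = q.castSucc := Fin.ext (by simpa using hp)
    rw [hpq, hnew]
  have hclass : ∀ p : Fin (n+1), (p:ℕ) ≠ (q:ℕ) → ∃ a : Fin n,
      (π' p : ℕ) = (π a : ℕ) ∧
      (((p:ℕ) = (a:ℕ) ∧ (a:ℕ) < (q:ℕ)) ∨ ((p:ℕ) = (a:ℕ)+1 ∧ (q:ℕ) ≤ (a:ℕ))) := by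
    intro p hp
    rcases Nat.lt_or_ge (p:ℕ) (q:ℕ) with h | h
    · have hlt : (p:ℕ) < n := lt_trans h hqn
      refine ⟨⟨(p:ℕ), hlt⟩, ?_, Or.inl ⟨rfl, h⟩⟩
      have hcast : (⟨(p:ℕ), hlt⟩ : Fin n).castSucc = p := Fin.ext (by simp)
      have hbb := hbefore ⟨(p:ℕ), hlt⟩ h
      rwa [hcast] at hbb
    · have h' : (q:ℕ) < (p:ℕ) := lt_of_le_of_ne h (Ne.symm hp)
      have hlt : (p:ℕ) - 1 < n := by have := p.isLt; omega
      refine ⟨⟨(p:ℕ)-1, hlt⟩, ?_, Or.inr ⟨by simp; omega, by simp; omega⟩⟩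
      have hsucc : (⟨(p:ℕ)-1, hlt⟩ : Fin n).succ = p := Fin.ext (by simp; omega)
      have hbb := hafter ⟨(p:ℕ)-1, hlt⟩ (by simp; omega)
      rwa [hsucc] at hbb
  by_cases hjq : (j:ℕ) = (q:ℕ)
  · -- j is the new max position
    have hvj := hval j hjq
    obtain ⟨ai, hvi, hci⟩ := hclass i (by omega)
    obtain ⟨ak, hvk, hck⟩ := hclass k (by omega)
    obtain ⟨al, hvl, hcl⟩ := hclass l (by omega)
    rcases hci with ⟨hei, hlti⟩ | ⟨hei, hgei⟩
    swap
    · omega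
    rcases hck with ⟨hek, hltk⟩ | ⟨hek, hgek⟩
    · omega
    rcases hcl with ⟨hel, hltl⟩ | ⟨hel, hgel⟩
    · omega
    have hkne : (ak:ℕ) ≠ (q:ℕ) := by
      intro h
      have hπak : (π ak : ℕ) = n - 1 := by
        have : ak = q := Fin.ext h
        rw [this, hq]
      have hine : (π ai : ℕ) ≠ n - 1 := hπne ai (by omega)
      have := hπlt ai
      rcases hpat with ⟨h1, h2, h3⟩ | ⟨h1, h2, h3⟩ <;> omega
    have hlne : (π al : ℕ) ≠ n - 1 := hπne al (by omega)
    have hine : (π ai : ℕ) ≠ n - 1 := hπne ai (by omega)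
    have hia := hπlt ai
    have hla := hπlt al
    rcases hpat with ⟨h1, h2, h3⟩ | ⟨h1, h2, h3⟩
    · exact hbax ⟨ai, q, ak, al,
        Fin.lt_def.mpr (by omega), Fin.lt_def.mpr (by omega), Fin.lt_def.mpr (by omega),
        Or.inl ⟨by omega, by omega, by omega⟩⟩
    · omega
  by_cases hkq : (k:ℕ) = (q:ℕ)
  · -- k is the new max position
    have hvk := hval k hkq
    obtain ⟨ai, hvi, hci⟩ := hclass i (by omega)
    obtain ⟨aj, hvj, hcj⟩ := hclass j (by omega)
    obtain ⟨al, hvl, hcl⟩ := hclass l (by omega)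
    rcases hci with ⟨hei, hlti⟩ | ⟨hei, hgei⟩
    swap
    · omega
    rcases hcj with ⟨hej, hltj⟩ | ⟨hej, hgej⟩
    swap
    · omega
    rcases hcl with ⟨hel, hltl⟩ | ⟨hel, hgel⟩
    · omega
    have hia := hπlt ai
    have hla := hπlt al
    have hine : (π ai : ℕ) ≠ n - 1 := hπne ai (by omega)
    have hlne : (al:ℕ) ≠ (q:ℕ) := by
      intro h
      have hπal : (π al : ℕ) = n - 1 := by
        have : al = q := Fin.ext h
        rw [this, hq]
      rcases hpat with ⟨h1, h2, h3⟩ | ⟨h1, h2, h3⟩ <;> omega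
    rcases hpat with ⟨h1, h2, h3⟩ | ⟨h1, h2, h3⟩
    · omega
    · exact hbax ⟨ai, aj, q, al,
        Fin.lt_def.mpr (by omega), Fin.lt_def.mpr (by omega), Fin.lt_def.mpr (by omega),
        Or.inr ⟨by omega, by omega, by omega⟩⟩
  by_cases hiq : (i:ℕ) = (q:ℕ)
  · have hvi := hval i hiq
    obtain ⟨ak, hvk, hck⟩ := hclass k (by omega)
    obtain ⟨al, hvl, hcl⟩ := hclass l (by omega)
    have := hπlt ak
    have := hπlt al
    rcases hpat with ⟨h1, h2, h3⟩ | ⟨h1, h2, h3⟩ <;> omega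
  by_cases hlq : (l:ℕ) = (q:ℕ)
  · have hvl := hval l hlq
    obtain ⟨ai, hvi, hci⟩ := hclass i (by omega)
    obtain ⟨aj, hvj, hcj⟩ := hclass j (by omega)
    have := hπlt ai
    have := hπlt aj
    rcases hpat with ⟨h1, h2, h3⟩ | ⟨h1, h2, h3⟩ <;> omega
  · -- none of the four positions is q
    obtain ⟨ai, hvi, hci⟩ := hclass i hiq
    obtain ⟨aj, hvj, hcj⟩ := hclass j hjq
    obtain ⟨ak, hvk, hck⟩ := hclass k hkq
    obtain ⟨al, hvl, hcl⟩ := hclass l hlq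
    rcases hci with ⟨hei, hi2⟩ | ⟨hei, hi2⟩ <;>
    rcases hcj with ⟨hej, hj2⟩ | ⟨hej, hj2⟩ <;>
    rcases hck with ⟨hek, hk2⟩ | ⟨hek, hk2⟩ <;>
    rcases hcl with ⟨hel, hl2⟩ | ⟨hel, hl2⟩ <;>
    rcases hpat with ⟨h1, h2, h3⟩ | ⟨h1, h2, h3⟩ <;>
    first
    | exact hbax ⟨ai, aj, ak, al,
        Fin.lt_def.mpr (by omega), Fin.lt_def.mpr (by omega), Fin.lt_def.mpr (by omega),
        Or.inl ⟨by omega, by omega, by omega⟩⟩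
    | exact hbax ⟨ai, aj, ak, al,
        Fin.lt_def.mpr (by omega), Fin.lt_def.mpr (by omega), Fin.lt_def.mpr (by omega),
        Or.inr ⟨by omega, by omega, by omega⟩⟩
end
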